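/- arXiv:1708.01924 — 4 statements merged into one kernel-verified Lean document; each statement's English description precedes it below -/
import Mathlib

section
/- Every H-category determines an HF-category: defining transport maps Hom(p,q) : Hom(a,b) → Hom(a',b') for p : a =_C a' and q : b =_C b' by Hom(p,q)(f) = τ_{b,b',q} ∘ f ∘ τ_{a',a,p⁻¹}, these maps are functorial (Hom(refl,refl) is the identity map up to Hom-setoid equality, and Hom(p',q') ∘ Hom(p,q) agrees with Hom(tr(p',p), tr(q',q))), respect the Hom-setoid equalities, preserve identities (Hom(p,p)(1_a) = 1_{a'}), and commute with composition. -/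
/-! All laws reduce to (H1)–(H3) after reassociating composites. The composite of two transports
has adjacent τ's on each side, which merge by (H3); `τ_q ∘ τ_{q⁻¹}` and `τ_{q⁻¹} ∘ τ_q` are
identities by (H3) followed by (H1), which gives `Hom(p,p)(1) ≈ 1`, and compatibility with
composition follows by inserting `τ_{q⁻¹} ∘ τ_q ≈ 1` between `g` and `f`. -/

universe u v w

/-- An E-category: a type of objects, Hom-setoids, identities and composition
satisfying the category laws up to the Hom-setoid equalities. -/
structure ECat (C : Type u) where
  Hom : C → C → Sort v
  eq : ∀ {a b : C}, Hom a b → Hom a b → Prop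
  eqv : ∀ a b : C, Equivalence (fun f g : Hom a b => eq f g)
  ide : ∀ a : C, Hom a a
  comp : ∀ {a b c : C}, Hom b c → Hom a b → Hom a c
  comp_congr : ∀ {a b c : C} {g g' : Hom b c} {f f' : Hom a b},
    eq g g' → eq f f' → eq (comp g f) (comp g' f')
  ide_comp : ∀ {a b : C} (f : Hom a b), eq (comp (ide b) f) f
  comp_ide : ∀ {a b : C} (f : Hom a b), eq (comp f (ide a)) f
  assoc : ∀ {a b c d : C} (h : Hom c d) (g : Hom b c) (f : Hom a b),
    eq (comp h (comp g f)) (comp (comp h g) f)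

/-- An H-structure on an E-category: an equivalence relation on objects together
with transport morphisms τ satisfying (H1)-(H3). -/
structure HStruct {C : Type u} (E : ECat C) where
  R : C → C → Prop
  requiv : Equivalence R
  tau : ∀ {a b : C}, R a b → E.Hom a b
  H1 : ∀ {a : C} (p : R a a), E.eq (tau p) (E.ide a)
  H2 : ∀ {a b : C} (p q : R a b), E.eq (tau p) (tau q)
  H3 : ∀ {a b c : C} (p : R a b) (q : R b c) (r : R a c),
    E.eq (E.comp (tau q) (tau p)) (tau r)

/-- The transport map `Hom(p,q)(f) = τ_{b,b',q} ∘ f ∘ τ_{a',a,p⁻¹}` of an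
H-category. -/
def htr {C : Type u} (E : ECat.{u, v} C) (H : HStruct E) {a a' b b' : C}
    (p : H.R a a') (q : H.R b b') (f : E.Hom a b) : E.Hom a' b' :=
  E.comp (H.tau q) (E.comp f (H.tau (H.requiv.symm p)))

notation:50 f:51 " ≈[" E "] " g:51 => ECat.eq E f g

namespace ECat

variable {C : Type u} (E : ECat.{u, v} C) {a b c : C}

theorem eq_refl (f : E.Hom a b) : f ≈[E] f := (E.eqv a b).refl f

variable {E}

theorem eq_symm {f g : E.Hom a b} (h : f ≈[E] g) : g ≈[E] f := (E.eqv a b).symm h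

theorem eq_trans {f g h : E.Hom a b} (h₁ : f ≈[E] g) (h₂ : g ≈[E] h) : f ≈[E] h :=
  (E.eqv a b).trans h₁ h₂

instance : Trans (@ECat.eq C E a b) (@ECat.eq C E a b) (@ECat.eq C E a b) := ⟨eq_trans⟩

theorem comp_congr_left {g g' : E.Hom b c} (h : g ≈[E] g') (f : E.Hom a b) :
    E.comp g f ≈[E] E.comp g' f :=
  E.comp_congr h (E.eq_refl f)

theorem comp_congr_right (g : E.Hom b c) {f f' : E.Hom a b} (h : f ≈[E] f') :
    E.comp g f ≈[E] E.comp g f' :=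
  E.comp_congr (E.eq_refl g) h

end ECat

namespace HStruct

variable {C : Type u} {E : ECat.{u, v} C} (H : HStruct E) {a b : C}

theorem tau_symm_comp_tau (p : H.R a b) :
    E.comp (H.tau (H.requiv.symm p)) (H.tau p) ≈[E] E.ide a :=
  ECat.eq_trans (H.H3 _ _ (H.requiv.refl a)) (H.H1 _)

theorem tau_comp_tau_symm (p : H.R a b) :
    E.comp (H.tau p) (H.tau (H.requiv.symm p)) ≈[E] E.ide b :=
  ECat.eq_trans (H.H3 _ _ (H.requiv.refl b)) (H.H1 _)

end HStruct

section Transport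

variable {C : Type u} {E : ECat.{u, v} C} (H : HStruct E)

theorem htr_congr {a a' b b' : C} (p : H.R a a') (q : H.R b b') {f f' : E.Hom a b}
    (h : f ≈[E] f') : htr E H p q f ≈[E] htr E H p q f' :=
  E.comp_congr_right _ (E.comp_congr_left h _)

theorem htr_refl {a b : C} (f : E.Hom a b) :
    htr E H (H.requiv.refl a) (H.requiv.refl b) f ≈[E] f :=
  calc htr E H (H.requiv.refl a) (H.requiv.refl b) f
    _ ≈[E] E.comp (E.ide b) (E.comp f (E.ide a)) :=
        E.comp_congr (H.H1 _) (E.comp_congr_right f (H.H1 _))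
    _ ≈[E] E.comp f (E.ide a) := E.ide_comp _
    _ ≈[E] f := E.comp_ide f

theorem htr_htr {a a' a'' b b' b'' : C} (p : H.R a a') (p' : H.R a' a'') (q : H.R b b')
    (q' : H.R b' b'') (f : E.Hom a b) :
    htr E H p' q' (htr E H p q f) ≈[E] htr E H (H.requiv.trans p p') (H.requiv.trans q q') f :=
  calc E.comp (H.tau q') (E.comp (E.comp (H.tau q) (E.comp f (H.tau _))) (H.tau _))
    _ ≈[E] E.comp (H.tau q') (E.comp (H.tau q) (E.comp (E.comp f (H.tau _)) (H.tau _))) :=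
        E.comp_congr_right _ (E.eq_symm (E.assoc _ _ _))
    _ ≈[E] E.comp (E.comp (H.tau q') (H.tau q)) (E.comp (E.comp f (H.tau _)) (H.tau _)) :=
        E.assoc _ _ _
    _ ≈[E] E.comp (H.tau _) (E.comp f (E.comp (H.tau _) (H.tau _))) :=
        E.comp_congr (H.H3 _ _ _) (E.eq_symm (E.assoc _ _ _))
    _ ≈[E] E.comp (H.tau _) (E.comp f (H.tau _)) :=
        E.comp_congr_right _ (E.comp_congr_right f (H.H3 _ _ _))

theorem htr_ide {a a' : C} (p : H.R a a') : htr E H p p (E.ide a) ≈[E] E.ide a' :=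
  calc E.comp (H.tau p) (E.comp (E.ide a) (H.tau _))
    _ ≈[E] E.comp (H.tau p) (H.tau _) := E.comp_congr_right _ (E.ide_comp _)
    _ ≈[E] E.ide a' := H.tau_comp_tau_symm p

theorem htr_comp {a a' b b' c c' : C} (p : H.R a a') (q : H.R b b') (r : H.R c c')
    (f : E.Hom a b) (g : E.Hom b c) :
    htr E H p r (E.comp g f) ≈[E] E.comp (htr E H q r g) (htr E H p q f) :=
  calc E.comp (H.tau r) (E.comp (E.comp g f) (H.tau _))
    _ ≈[E] E.comp (H.tau r) (E.comp g (E.comp f (H.tau _))) :=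
        E.comp_congr_right _ (E.eq_symm (E.assoc _ _ _))
    _ ≈[E] E.comp (H.tau r)
          (E.comp g (E.comp (E.comp (H.tau (H.requiv.symm q)) (H.tau q)) (E.comp f (H.tau _)))) :=
        E.comp_congr_right _ (E.comp_congr_right g (E.eq_symm
          (E.eq_trans (E.comp_congr_left (H.tau_symm_comp_tau q) _) (E.ide_comp _))))
    _ ≈[E] E.comp (H.tau r)
          (E.comp (E.comp g (H.tau _)) (E.comp (H.tau q) (E.comp f (H.tau _)))) :=
        E.comp_congr_right _ (E.eq_trans (E.comp_congr_right g (E.eq_symm (E.assoc _ _ _)))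
          (E.assoc _ _ _))
    _ ≈[E] E.comp (E.comp (H.tau r) (E.comp g (H.tau _)))
          (E.comp (H.tau q) (E.comp f (H.tau _))) :=
        E.assoc _ _ _

end Transport

/-- Every H-category determines an HF-category: the transport maps `Hom(p,q)`
respect the Hom-setoid equalities, are functorial (identity proofs give the
identity map, and transports compose), preserve identities and commute with
composition. -/
theorem hcat_gives_hfcat {C : Type u} (E : ECat.{u, v} C) (H : HStruct E) :
    (∀ {a a' b b' : C} (p : H.R a a') (q : H.R b b') {f f' : E.Hom a b},
      E.eq f f' → E.eq (htr E H p q f) (htr E H p q f')) ∧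
    (∀ {a b : C} (f : E.Hom a b),
      E.eq (htr E H (H.requiv.refl a) (H.requiv.refl b) f) f) ∧
    (∀ {a a' a'' b b' b'' : C} (p : H.R a a') (p' : H.R a' a'')
      (q : H.R b b') (q' : H.R b' b'') (f : E.Hom a b),
      E.eq (htr E H p' q' (htr E H p q f))
        (htr E H (H.requiv.trans p p') (H.requiv.trans q q') f)) ∧
    (∀ {a a' : C} (p : H.R a a'), E.eq (htr E H p p (E.ide a)) (E.ide a')) ∧
    (∀ {a a' b b' c c' : C} (p : H.R a a') (q : H.R b b') (r : H.R c c')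
      (f : E.Hom a b) (g : E.Hom b c),
      E.eq (htr E H p r (E.comp g f))
        (E.comp (htr E H q r g) (htr E H p q f))) :=
  ⟨htr_congr H, htr_refl H, htr_htr H, htr_ide H, htr_comp H⟩
end

section
/- Specifying an H-structure on an E-category C with object type C₀ is equivalent to giving an equivalence relation =_C on C₀ together with an E-functor from the E-category (C₀, =_C)^# to C that is the identity on objects, where (C₀, =_C)^# has objects C₀ and Hom(a,b) the setoid of proofs of a =_C b with the total (always-true) equivalence relation. -/
universe u v w

universe v'

/-- An E-functor between E-categories: an object map and extensional maps on
Hom-setoids preserving identities and composition up to the Hom-setoid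
equality. -/
structure EFunctor {C : Type u} {D : Type w} (E : ECat.{u, v} C)
    (F : ECat.{w, v'} D) where
  obj : C → D
  map : ∀ {a b : C}, E.Hom a b → F.Hom (obj a) (obj b)
  map_congr : ∀ {a b : C} {f g : E.Hom a b}, E.eq f g → F.eq (map f) (map g)
  map_ide : ∀ a : C, F.eq (map (E.ide a)) (F.ide (obj a))
  map_comp : ∀ {a b c : C} (g : E.Hom b c) (f : E.Hom a b),
    F.eq (map (E.comp g f)) (F.comp (map g) (map f))

/-- The E-category `(C₀, =_C)^#`: objects `C₀`, `Hom(a,b)` the proofs of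
`a =_C b` with the total equivalence relation. -/
def sharp {C₀ : Type u} (R : C₀ → C₀ → Prop) (hR : Equivalence R) :
    ECat.{u, 0} C₀ where
  Hom a b := R a b
  eq _ _ := True
  eqv _ _ := ⟨fun _ => trivial, fun _ => trivial, fun _ _ => trivial⟩
  ide a := hR.refl a
  comp q p := hR.trans p q
  comp_congr _ _ := trivial
  ide_comp _ := trivial
  comp_ide _ := trivial
  assoc _ _ _ := trivial

/-- `tau` satisfies the H-structure axioms (H1)–(H3) for the relation `R`. -/
def IsTransport {C₀ : Type u} (E : ECat.{u, v} C₀) (R : C₀ → C₀ → Prop)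
    (tau : ∀ a b : C₀, R a b → E.Hom a b) : Prop :=
  (∀ (a : C₀) (p : R a a), E.eq (tau a a p) (E.ide a)) ∧
    (∀ (a b : C₀) (p q : R a b), E.eq (tau a b p) (tau a b q)) ∧
    (∀ (a b c : C₀) (p : R a b) (q : R b c) (r : R a c),
      E.eq (E.comp (tau b c q) (tau a b p)) (tau a c r))

namespace EFunctor

variable {C₀ : Type u} {E : ECat.{u, v} C₀} {R : C₀ → C₀ → Prop} {hR : Equivalence R}

theorem map_sharp_congr (F : EFunctor (sharp R hR) E) {a b : C₀} (p q : R a b) :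
    E.eq (F.map p) (F.map q) :=
  F.map_congr trivial

theorem map_sharp_refl (F : EFunctor (sharp R hR) E) {a : C₀} (p : R a a) :
    E.eq (F.map p) (E.ide (F.obj a)) :=
  F.map_ide a

theorem map_sharp_trans (F : EFunctor (sharp R hR) E) {a b c : C₀}
    (p : R a b) (q : R b c) (r : R a c) :
    E.eq (E.comp (F.map q) (F.map p)) (F.map r) :=
  (E.eqv _ _).symm (F.map_comp q p)

def ofTransport (tau : ∀ a b : C₀, R a b → E.Hom a b) (h : IsTransport E R tau) :
    EFunctor (sharp R hR) E where
  obj := id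
  map {a b} p := tau a b p
  map_congr {a b} p q _ := h.2.1 a b p q
  map_ide a := h.1 a (hR.refl a)
  map_comp {a b c} q p := (E.eqv a c).symm (h.2.2 a b c p q (hR.trans p q))

theorem exists_isTransport_of_obj_eq_self (F : EFunctor (sharp R hR) E)
    (hF : ∀ a, F.obj a = a) : ∃ tau, IsTransport E R tau := by
  obtain ⟨obj, map, map_congr, map_ide, map_comp⟩ := F
  obtain rfl : obj = id := funext hF
  let F' : EFunctor (sharp R hR) E := ⟨id, map, map_congr, map_ide, map_comp⟩
  exact ⟨fun _ _ p => map p, fun _ => F'.map_sharp_refl, fun _ _ => F'.map_sharp_congr,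
    fun _ _ _ => F'.map_sharp_trans⟩

end EFunctor

/-- Specifying an H-structure on an E-category with a given equivalence
relation on objects is the same as giving an E-functor from `(C₀, =_C)^#`
which is the identity on objects. -/
theorem hstruct_iff_sharp_functor {C₀ : Type u} (E : ECat.{u, v} C₀)
    (R : C₀ → C₀ → Prop) (hR : Equivalence R) :
    (∃ tau : ∀ a b : C₀, R a b → E.Hom a b,
      (∀ (a : C₀) (p : R a a), E.eq (tau a a p) (E.ide a)) ∧
      (∀ (a b : C₀) (p q : R a b), E.eq (tau a b p) (tau a b q)) ∧
      (∀ (a b c : C₀) (p : R a b) (q : R b c) (r : R a c),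
        E.eq (E.comp (tau b c q) (tau a b p)) (tau a c r))) ↔
    (∃ F : EFunctor (sharp R hR) E, ∀ a : C₀, F.obj a = a) :=
  ⟨fun ⟨tau, h⟩ => ⟨EFunctor.ofTransport tau h, fun _ => rfl⟩,
    fun ⟨F, hF⟩ => F.exists_isTransport_of_obj_eq_self hF⟩
end

section
/- Assume the Zermelo axiom of choice for setoids (ZAC). Then for any setoid A there is an extensional function s : A → Ā (where Ā is the carrier of A equipped with its identity type as equality) such that x =_A s(x) for all x : A, and x =_A u implies Id(s(x), s(u)); i.e., s selects a canonical representative from each equivalence class. -/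
universe u

theorem Setoid.rel_iff_of_rel_of_eq {α : Type*} (S : Setoid α) {x x' y y' : α}
    (hx : S.r x x') (hy : y = y') : S.r x y ↔ S.r x' y' := by
  subst hy
  exact ⟨S.trans (S.symm hx), S.trans hx⟩

/- Apply ZAC to `=_A` itself, as a relation from `A` to `Ā = ⊥` (the relation of `⊥ : Setoid α`
is `Eq` by definition): it is compatible since `=_A` is an equivalence, total by reflexivity, and
extensionality into `⊥` is exactly the `Id`-invariance. -/
/-- (Using ZAC) For any setoid `A` there is an extensional function
`s : A → Ā` (where `Ā` carries the identity type as equality) such that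
`x =_A s(x)` for all `x`, and `x =_A u` implies `Id(s(x), s(u))`: `s` selects
a canonical representative of each equivalence class. -/
theorem zac_selection
    (ZAC : ∀ (α β : Type u) (SA : Setoid α) (SB : Setoid β)
      (R : α → β → Prop),
      (∀ x x' y y', SA.r x x' → SB.r y y' → (R x y ↔ R x' y')) →
      (∀ x, ∃ y, R x y) →
      ∃ f : α → β, (∀ x x', SA.r x x' → SB.r (f x) (f x')) ∧ ∀ x, R x (f x))
    (α : Type u) (SA : Setoid α) :
    ∃ s : α → α, (∀ x u, SA.r x u → s x = s u) ∧ (∀ x, SA.r x (s x)) := by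
  obtain ⟨s, hs_ext, hs_rel⟩ := ZAC α α SA ⊥ SA.r
    (fun _ _ _ _ hx hy => SA.rel_iff_of_rel_of_eq hx hy)
    (fun x => ⟨x, SA.refl x⟩)
  exact ⟨s, hs_ext, hs_rel⟩
end

section
/- Given an HF-category C, the induced family τ_{a,b,p} := Hom(refl(a), p)(1_a) for p : a =_C b defines an H-structure on the underlying E-category: it satisfies (H1) τ_{a,a,p} = 1_a, (H2) τ_{a,b,p} = τ_{a,b,q}, and (H3) τ_{b,c,q} ∘ τ_{a,b,p} = τ_{a,c,r}. -/
/-!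
(H2) is proof irrelevance of transport and (H1) is preservation of identities. For (H3),
write `1_b` as `Hom(p, p)(1_a)`; functoriality of transport turns `τ_q` into `Hom(p, r)(1_a)`,
and preservation of composition applied to `1_a ∘ 1_a` gives `τ_q ∘ τ_p = Hom(refl a, r)(1_a) = τ_r`.
-/

universe u v

/-- An HF-category: a setoid of objects, a proof-irrelevant family of
Hom-setoids indexed by pairs of objects (i.e. coherent transport maps along
proofs of object equality), with identities and associative unital composition
compatible with transport. -/
structure HFCat (C : Type u) where
  R : C → C → Prop
  requiv : Equivalence R
  Hom : C → C → Sort v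
  eq : ∀ {a b : C}, Hom a b → Hom a b → Prop
  eqv : ∀ a b : C, Equivalence (fun f g : Hom a b => eq f g)
  ide : ∀ a : C, Hom a a
  comp : ∀ {a b c : C}, Hom b c → Hom a b → Hom a c
  comp_congr : ∀ {a b c : C} {g g' : Hom b c} {f f' : Hom a b},
    eq g g' → eq f f' → eq (comp g f) (comp g' f')
  ide_comp : ∀ {a b : C} (f : Hom a b), eq (comp (ide b) f) f
  comp_ide : ∀ {a b : C} (f : Hom a b), eq (comp f (ide a)) f
  assoc : ∀ {a b c d : C} (h : Hom c d) (g : Hom b c) (f : Hom a b),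
    eq (comp h (comp g f)) (comp (comp h g) f)
  /-- Transport along proofs of object equality. -/
  tr : ∀ {a a' b b' : C}, R a a' → R b b' → Hom a b → Hom a' b'
  tr_congr : ∀ {a a' b b' : C} (p : R a a') (q : R b b') {f f' : Hom a b},
    eq f f' → eq (tr p q f) (tr p q f')
  tr_irrel : ∀ {a a' b b' : C} (p p' : R a a') (q q' : R b b') (f : Hom a b),
    eq (tr p q f) (tr p' q' f)
  tr_refl : ∀ {a b : C} (f : Hom a b),
    eq (tr (requiv.refl a) (requiv.refl b) f) f
  tr_trans : ∀ {a a' a'' b b' b'' : C} (p : R a a') (p' : R a' a'')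
    (q : R b b') (q' : R b' b'') (f : Hom a b),
    eq (tr p' q' (tr p q f)) (tr (requiv.trans p p') (requiv.trans q q') f)
  tr_ide : ∀ {a a' : C} (p : R a a'), eq (tr p p (ide a)) (ide a')
  tr_comp : ∀ {a a' b b' c c' : C} (p : R a a') (q : R b b') (r : R c c')
    (g : Hom b c) (f : Hom a b),
    eq (tr p r (comp g f)) (comp (tr q r g) (tr p q f))

/-- The H-structure transport induced by an HF-category:
`τ_{a,b,p} = Hom(refl a, p)(1_a)`. -/
def HFCat.tau {C : Type u} (F : HFCat.{u, v} C) {a b : C} (p : F.R a b) :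
    F.Hom a b :=
  F.tr (F.requiv.refl a) p (F.ide a)

namespace HFCat

variable {C : Type u} (F : HFCat.{u, v} C)

local notation:50 f:51 " ≈ₕ " g:51 => HFCat.eq F f g

instance instTransEq (a b : C) : Trans (@F.eq a b) (@F.eq a b) (@F.eq a b) :=
  ⟨(F.eqv a b).trans⟩

theorem tau_eq_tau {a b : C} (p q : F.R a b) : F.tau p ≈ₕ F.tau q :=
  F.tr_irrel _ _ _ _ _

theorem tau_eq_ide {a : C} (p : F.R a a) : F.tau p ≈ₕ F.ide a :=
  calc F.tau p
    _ ≈ₕ F.tr p p (F.ide a) := F.tr_irrel _ _ _ _ _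
    _ ≈ₕ F.ide a := F.tr_ide p

theorem tr_ide_eq_tau {a b c : C} (p : F.R a b) (q : F.R b c) (r : F.R a c) :
    F.tr p r (F.ide a) ≈ₕ F.tau q :=
  calc F.tr p r (F.ide a)
    _ ≈ₕ F.tr (F.requiv.trans p (F.requiv.refl b)) (F.requiv.trans p q) (F.ide a) :=
        F.tr_irrel _ _ _ _ _
    _ ≈ₕ F.tr (F.requiv.refl b) q (F.tr p p (F.ide a)) :=
        (F.eqv b c).symm (F.tr_trans _ _ _ _ _)
    _ ≈ₕ F.tau q := F.tr_congr _ _ (F.tr_ide p)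

theorem comp_tau_tau {a b c : C} (p : F.R a b) (q : F.R b c) (r : F.R a c) :
    F.comp (F.tau q) (F.tau p) ≈ₕ F.tau r :=
  calc F.comp (F.tau q) (F.tau p)
    _ ≈ₕ F.comp (F.tr p r (F.ide a)) (F.tau p) :=
        F.comp_congr ((F.eqv b c).symm (F.tr_ide_eq_tau p q r)) ((F.eqv a b).refl _)
    _ ≈ₕ F.tr (F.requiv.refl a) r (F.comp (F.ide a) (F.ide a)) :=
        (F.eqv a c).symm (F.tr_comp _ _ _ _ _)
    _ ≈ₕ F.tau r := F.tr_congr _ _ (F.ide_comp _)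

end HFCat

/-- Given an HF-category, the family `τ_{a,b,p} := Hom(refl a, p)(1_a)`
defines an H-structure on the underlying E-category: it satisfies (H1), (H2)
and (H3). -/
theorem hfcat_gives_hstruct {C : Type u} (F : HFCat.{u, v} C) :
    (∀ {a : C} (p : F.R a a), F.eq (F.tau p) (F.ide a)) ∧
    (∀ {a b : C} (p q : F.R a b), F.eq (F.tau p) (F.tau q)) ∧
    (∀ {a b c : C} (p : F.R a b) (q : F.R b c) (r : F.R a c),
      F.eq (F.comp (F.tau q) (F.tau p)) (F.tau r)) :=
  ⟨F.tau_eq_ide, F.tau_eq_tau, F.comp_tau_tau⟩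
end
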